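/- arXiv:2605.25277 — 6 statements merged into one kernel-verified Lean document; each statement's English description precedes it below -/
import Mathlib

section
/- Let V be an n-dimensional vector space over a field K, A an endomorphism of V, and e ∈ V a cyclic vector for A (i.e., e, Ae, ..., A^{n-1}e is a basis). If b is a symmetric bilinear form on V satisfying b(e,·)=0 and b(Y, AZ) = b(Z, AY) for all Y, Z ∈ V, then b = 0. -/
theorem LinearMap.apply_pow_apply_eq_apply_apply_pow {K V : Type*} [Field K] [AddCommGroup V]
    [Module K V] {A : Module.End K V} {b : V →ₗ[K] V →ₗ[K] K}
    (hsymm : ∀ x y, b x y = b y x) (hA : ∀ y z, b y (A z) = b z (A y)) (i : ℕ) (x y : V) :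
    b ((A ^ i) x) y = b x ((A ^ i) y) := by
  induction i generalizing y with
  | zero => rfl
  | succ i ih =>
    calc b ((A ^ (i + 1)) x) y = b y (A ((A ^ i) x)) := by rw [pow_succ', Module.End.mul_apply, hsymm]
      _ = b ((A ^ i) x) (A y) := hA _ _
      _ = b x ((A ^ (i + 1)) y) := by rw [ih, pow_succ, Module.End.mul_apply]

/-- If `e` is a cyclic vector for `A` on an `n`-dimensional space and `b` is a symmetric
bilinear form with `b e = 0` and `b Y (A Z) = b Z (A Y)`, then `b = 0`. -/
theorem stmt0 {K V : Type*} [Field K] [AddCommGroup V] [Module K V] {n : ℕ}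
    (A : Module.End K V) (e : V)
    (bas : Module.Basis (Fin n) K V) (hbas : ∀ i : Fin n, bas i = (A ^ (i : ℕ)) e)
    (b : V →ₗ[K] V →ₗ[K] K)
    (hsymm : ∀ x y, b x y = b y x)
    (he : ∀ z, b e z = 0)
    (hA : ∀ y z, b y (A z) = b z (A y)) :
    b = 0 := by
  refine bas.ext fun i => bas.ext fun j => ?_
  rw [hbas, LinearMap.apply_pow_apply_eq_apply_apply_pow hsymm hA, he]
  rfl
end

section
/- Let V be an n-dimensional vector space, A an endomorphism with cyclic vector e, and W an auxiliary finite-dimensional vector space. The map M_A sending a symmetric bilinear W-valued map S with S(e,·)=0 to the alternating W-valued map (Y,Z) ↦ S(Y,AZ) − S(Z,AY) is injective on {S : V×V → W symmetric bilinear, S(e,·)=0}. -/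
/-! The relation `S Y (A Z) = S Z (A Y)` moves one factor of `A` from the second argument to the
first, so `S (Aⁱ e) (Aʲ e) = S (Aʲ⁻¹ e) (Aⁱ⁺¹ e)`; iterating lowers the second exponent to `0`,
where symmetry and `S e = 0` give zero. The vectors `Aⁱ e` span `V`, hence `S = 0`. -/

section CyclicBilinear

variable {R V W : Type*} [CommSemiring R] [AddCommMonoid V] [Module R V]
  [AddCommMonoid W] [Module R W] {S : V →ₗ[R] V →ₗ[R] W} {A : Module.End R V}

theorem apply_pow_apply_pow_succ_eq (hA : ∀ y z, S y (A z) = S z (A y)) (e : V) (i j : ℕ) :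
    S ((A ^ i) e) ((A ^ (j + 1)) e) = S ((A ^ j) e) ((A ^ (i + 1)) e) := by
  simpa only [pow_succ', Module.End.mul_apply] using hA ((A ^ i) e) ((A ^ j) e)

theorem apply_pow_apply_pow_eq_zero (hsymm : ∀ x y, S x y = S y x) {e : V}
    (he : ∀ z, S e z = 0) (hA : ∀ y z, S y (A z) = S z (A y)) (i j : ℕ) :
    S ((A ^ i) e) ((A ^ j) e) = 0 := by
  induction j generalizing i with
  | zero => rw [pow_zero, Module.End.one_apply, hsymm, he]
  | succ j ih => rw [apply_pow_apply_pow_succ_eq hA, hsymm, ih (i + 1)]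

end CyclicBilinear

/-- Vector-valued cyclic injectivity: a symmetric `W`-valued bilinear map `S` with
`S e = 0` and `S Y (A Z) = S Z (A Y)` vanishes, when `e` is cyclic for `A`. -/
theorem stmt2 {K V W : Type*} [Field K] [AddCommGroup V] [Module K V]
    [AddCommGroup W] [Module K W] {n : ℕ}
    (A : Module.End K V) (e : V)
    (bas : Module.Basis (Fin n) K V) (hbas : ∀ i : Fin n, bas i = (A ^ (i : ℕ)) e)
    (S : V →ₗ[K] V →ₗ[K] W)
    (hsymm : ∀ x y, S x y = S y x)
    (he : ∀ z, S e z = 0)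
    (hA : ∀ y z, S y (A z) = S z (A y)) :
    S = 0 := by
  refine bas.ext fun i => bas.ext fun j => ?_
  rw [hbas, hbas, apply_pow_apply_pow_eq_zero hsymm he hA, LinearMap.zero_apply,
    LinearMap.zero_apply]
end

section
/- Let V be an n-dimensional vector space, A an endomorphism with cyclic vector e, and let h be an alternating (skew-symmetric) bilinear form on V such that h(u, Av) + h(v, Au) = 0 for all u, v ∈ V. Then h = 0. -/
/-!
Skew-symmetry turns `h u (A v) + h v (A u) = 0` into `h (A u) v = h u (A v)`, i.e. `A` is
self-adjoint for `h`. Hence `h (Aⁱ e) (Aʲ e) = h e (Aⁱ⁺ʲ e)` is symmetric in `i, j`; being also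
skew-symmetric, it vanishes when `2 ≠ 0`, and the vectors `Aⁱ e` form a basis.
-/

namespace LinearMap

theorem IsSelfAdjoint.pow {R M N : Type*} [CommSemiring R] [AddCommMonoid M] [Module R M]
    [AddCommMonoid N] [Module R N] {B : M →ₗ[R] M →ₗ[R] N} {f : Module.End R M}
    (hf : B.IsSelfAdjoint f) (k : ℕ) : B.IsSelfAdjoint ⇑(f ^ k) := by
  induction k with
  | zero => exact isAdjointPair_one
  | succ k ih =>
    have h := ih.mul hf
    rwa [← pow_succ, ← pow_succ'] at h

theorem isSelfAdjoint_of_skew {R M N : Type*} [CommRing R] [AddCommGroup M] [Module R M]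
    [AddCommGroup N] [Module R N] {B : M →ₗ[R] M →ₗ[R] N} {f : Module.End R M}
    (hskew : ∀ u v, B u v = -B v u) (hf : ∀ u v, B u (f v) + B v (f u) = 0) :
    B.IsSelfAdjoint f := fun u v => by
  rw [hskew, ← add_eq_zero_iff_neg_eq', add_comm]
  exact hf v u

theorem apply_pow_apply_pow_eq_zero {K M : Type*} [Field K] [AddCommGroup M] [Module K M]
    (hchar : (2 : K) ≠ 0) {B : M →ₗ[K] M →ₗ[K] K} {f : Module.End K M}
    (hskew : ∀ u v, B u v = -B v u) (hf : B.IsSelfAdjoint f) (x : M) (i j : ℕ) :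
    B ((f ^ i) x) ((f ^ j) x) = 0 := by
  have to_base : ∀ a b : ℕ, B ((f ^ a) x) ((f ^ b) x) = B x ((f ^ (a + b)) x) := fun a b => by
    rw [(hf.pow a) x, pow_add, Module.End.mul_apply]
  have symm : B ((f ^ i) x) ((f ^ j) x) = B ((f ^ j) x) ((f ^ i) x) := by
    rw [to_base, to_base, add_comm]
  have two_mul_eq : (2 : K) * B ((f ^ i) x) ((f ^ j) x) = 0 := by
    linear_combination symm + hskew ((f ^ i) x) ((f ^ j) x)
  exact (mul_eq_zero.mp two_mul_eq).resolve_left hchar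

end LinearMap

/-- If `e` is cyclic for `A` and `h` is a skew-symmetric bilinear form with
`h u (A v) + h v (A u) = 0` for all `u, v`, then `h = 0` (char `K` ≠ 2). -/
theorem stmt3 {K V : Type*} [Field K] [AddCommGroup V] [Module K V] {n : ℕ}
    (hchar : (2 : K) ≠ 0)
    (A : Module.End K V) (e : V)
    (bas : Module.Basis (Fin n) K V) (hbas : ∀ i : Fin n, bas i = (A ^ (i : ℕ)) e)
    (h : V →ₗ[K] V →ₗ[K] K)
    (hskew : ∀ u v, h u v = - h v u)
    (hA : ∀ u v, h u (A v) + h v (A u) = 0) :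
    h = 0 := by
  have hself : h.IsSelfAdjoint A := LinearMap.isSelfAdjoint_of_skew hskew hA
  refine LinearMap.ext_basis bas bas fun i j => ?_
  rw [hbas, hbas, LinearMap.zero_apply, LinearMap.zero_apply]
  exact LinearMap.apply_pow_apply_pow_eq_zero hchar hskew hself e i j
end

section
/- Let V be an n-dimensional vector space, A an endomorphism with cyclic vector e, W a vector space, and H : V × V → W a bilinear alternating map such that H(u, Av) + H(v, Au) = 0 for all u, v ∈ V. Then H = 0. -/
/-!
The condition says that `A` is self-adjoint for `H`: `H (A u) v = H u (A v)`. Hence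
`H (Aⁱ e) (Aʲ e) = H e (Aⁱ⁺ʲ e)` is symmetric in `i, j`; being also skew, it vanishes
once `2` acts injectively on `W`, and the vectors `Aⁱ e` span `V`.
-/

namespace LinearMap

variable {R V W : Type*} [CommRing R] [AddCommGroup V] [Module R V] [AddCommGroup W] [Module R W]
  {H : V →ₗ[R] V →ₗ[R] W} {A : Module.End R V}

theorem apply_map_left_of_skew (hskew : ∀ u v, H u v = - H v u)
    (hA : ∀ u v, H u (A v) + H v (A u) = 0) (u v : V) :
    H (A u) v = H u (A v) := by
  rw [hskew, neg_eq_iff_add_eq_zero, add_comm, hA]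

theorem apply_pow_left_of_skew (hskew : ∀ u v, H u v = - H v u)
    (hA : ∀ u v, H u (A v) + H v (A u) = 0) (i : ℕ) (u v : V) :
    H ((A ^ i) u) v = H u ((A ^ i) v) := by
  induction i generalizing v with
  | zero => rfl
  | succ i ih =>
    calc H ((A ^ (i + 1)) u) v = H (A ((A ^ i) u)) v := by rw [pow_succ', Module.End.mul_apply]
      _ = H ((A ^ i) u) (A v) := apply_map_left_of_skew hskew hA _ _
      _ = H u ((A ^ i) (A v)) := ih _
      _ = H u ((A ^ (i + 1)) v) := by rw [pow_succ, Module.End.mul_apply]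

theorem apply_pow_pow_eq_zero_of_skew (h2 : IsSMulRegular W (2 : R)) (hskew : ∀ u v, H u v = - H v u)
    (hA : ∀ u v, H u (A v) + H v (A u) = 0) (e : V) (i j : ℕ) :
    H ((A ^ i) e) ((A ^ j) e) = 0 := by
  have hsymm : H ((A ^ i) e) ((A ^ j) e) = H ((A ^ j) e) ((A ^ i) e) := by
    rw [apply_pow_left_of_skew hskew hA, apply_pow_left_of_skew hskew hA j, ← Module.End.mul_apply,
      ← Module.End.mul_apply, ← pow_add, ← pow_add, add_comm]
  refine h2 (show (2 : R) • _ = (2 : R) • 0 from ?_)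
  rw [smul_zero, two_smul]
  nth_rewrite 2 [hsymm]
  rw [hskew ((A ^ j) e), add_neg_cancel]

end LinearMap

/-- Vector-valued version: if `e` is cyclic for `A` and `H` is a skew-symmetric bilinear
`W`-valued map with `H u (A v) + H v (A u) = 0`, then `H = 0` (char `K` ≠ 2). -/
theorem stmt4 {K V W : Type*} [Field K] [AddCommGroup V] [Module K V]
    [AddCommGroup W] [Module K W] {n : ℕ}
    (hchar : (2 : K) ≠ 0)
    (A : Module.End K V) (e : V)
    (bas : Module.Basis (Fin n) K V) (hbas : ∀ i : Fin n, bas i = (A ^ (i : ℕ)) e)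
    (H : V →ₗ[K] V →ₗ[K] W)
    (hskew : ∀ u v, H u v = - H v u)
    (hA : ∀ u v, H u (A v) + H v (A u) = 0) :
    H = 0 := by
  refine bas.ext fun i ↦ bas.ext fun j ↦ ?_
  rw [hbas, hbas, LinearMap.apply_pow_pow_eq_zero_of_skew (hchar.isUnit.isSMulRegular W) hskew hA]
  rfl
end

section
/- Let A = ⊕_{α=1}^r A_α be a direct sum of truncated polynomial algebras A_α = K[ξ]/(ξ^{m_α}), with unit e = Σ_α e_α, and let X = Σ_α X_α with X_α = Σ_i x_i^{(α)} ξ^{i−1} ∈ A_α. Then e is a cyclic vector for multiplication by X on A if and only if: (i) for each α with m_α ≥ 2, x_2^{(α)} ≠ 0, and (ii) x_1^{(α)} ≠ x_1^{(β)} for all α ≠ β. -/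
/-!
Write `X_α = c_α + ξ u_α` with `c_α = x₁^{(α)}`. If `x₂^{(α)} ≠ 0`, then `u_α` is a unit, so
`X_α - c_α` is nilpotent of order exactly `m_α` (trivially so if `m_α = 1`) and the minimal
polynomial of `X_α` is `(T - c_α)^{m_α}`. For distinct `c_α` these are pairwise coprime, so the
minimal polynomial of `X` has degree at least `n = dim A`, and `1, X, …, X^{n-1}` are independent.

Conversely, if `e` is cyclic then `X` generates `A` as an algebra, so an algebra map out of `A` is
determined by its value at `X`. If `x₂^{(α)} = 0`, reducing the block `A_α` modulo `ξ²` and taking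
its constant term give two such maps that agree at `X` but not at `ξ`. If `c_α = c_β`, the constant
terms of the blocks `α` and `β` agree at `X` but not at `e_α`.
-/

open Polynomial

theorem minpoly_eq_X_pow_of_pow_eq_zero {K B : Type*} [Field K] [Ring B] [Algebra K B]
    {y : B} {m : ℕ} (h : y ^ m = 0) (h' : y ^ (m - 1) ≠ 0) : minpoly K y = X ^ m := by
  have hint : IsIntegral K y := ⟨X ^ m, monic_X_pow m, by simp [h]⟩
  obtain ⟨k, hkm, hassoc⟩ := (dvd_prime_pow prime_X m).1 (minpoly.dvd K y (by simp [h]))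
  have hk : minpoly K y = X ^ k :=
    eq_of_monic_of_associated (minpoly.monic hint) (monic_X_pow k) hassoc
  have hyk : y ^ k = 0 := by simpa [hk] using minpoly.aeval K y
  obtain rfl : k = m := by
    by_contra hne
    exact h' (pow_eq_zero_of_le (by omega) hyk)
  exact hk

theorem sum_fin_succ_smul_pow {R B : Type*} [CommSemiring R] [Semiring B] [Algebra R B]
    (t : B) {k : ℕ} (y : Fin (k + 1) → R) :
    ∑ j, y j • t ^ (j : ℕ) =
      algebraMap R B (y 0) + t * ∑ j : Fin k, y j.succ • t ^ (j : ℕ) := by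
  rw [Fin.sum_univ_succ, Finset.mul_sum]
  simp [pow_succ', Algebra.algebraMap_eq_smul_one]

theorem isUnit_sum_fin_succ_smul_pow {R B : Type*} [CommSemiring R] [CommRing B] [Algebra R B]
    {t : B} (ht : IsNilpotent t) {k : ℕ} (y : Fin (k + 1) → R) (hy : IsUnit (y 0)) :
    IsUnit (∑ j, y j • t ^ (j : ℕ)) := by
  rw [sum_fin_succ_smul_pow]
  exact ((Commute.all _ _).isNilpotent_mul_right ht).isUnit_add_left_of_commute
    (hy.map _) (Commute.all _ _)

namespace AdjoinRoot

variable {K : Type*} [Field K] {m : ℕ}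

theorem root_X_pow_pow_self : root (X ^ m : K[X]) ^ m = 0 := by
  rw [← mk_self (f := (X ^ m : K[X])), ← aeval_eq, map_pow, aeval_X]

theorem root_X_pow_pow_ne_zero {k : ℕ} (hk : k < m) : root (X ^ m : K[X]) ^ k ≠ 0 := by
  have hdeg : (minpoly K (root (X ^ m : K[X]))).natDegree = m := by
    simp [minpoly_root (pow_ne_zero m X_ne_zero)]
  exact (linearIndependent_pow _).ne_zero (⟨k, hdeg ▸ hk⟩ : Fin _)

instance finite_X_pow : Module.Finite K (AdjoinRoot (X ^ m : K[X])) :=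
  (monic_X_pow m).finite_adjoinRoot

theorem finrank_X_pow : Module.finrank K (AdjoinRoot (X ^ m : K[X])) = m := by
  rw [(powerBasis (pow_ne_zero m X_ne_zero)).finrank, powerBasis_dim, natDegree_X_pow]

theorem minpoly_sum_smul_root_pow (hm : 1 ≤ m) (y : Fin m → K)
    (hy : ∀ h : 2 ≤ m, y ⟨1, h⟩ ≠ 0) :
    minpoly K (∑ j, y j • root (X ^ m : K[X]) ^ (j : ℕ)) = (X - C (y ⟨0, hm⟩)) ^ m := by
  obtain ⟨k, rfl⟩ := Nat.exists_eq_add_of_le' hm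
  -- the sum is `y₀ + ξ u`; only `u ^ k` needs to be a unit, which is automatic when `k = 0`
  set u := ∑ j : Fin k, y j.succ • root (X ^ (k + 1) : K[X]) ^ (j : ℕ)
  have hu : IsUnit (u ^ k) := by
    cases k with
    | zero => simp
    | succ l =>
      exact (isUnit_sum_fin_succ_smul_pow ⟨_, root_X_pow_pow_self⟩ _
        (hy (by omega)).isUnit).pow _
  have hmin : minpoly K (root (X ^ (k + 1) : K[X]) * u) = X ^ (k + 1) := by
    refine minpoly_eq_X_pow_of_pow_eq_zero (by rw [mul_pow, root_X_pow_pow_self, zero_mul]) ?_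
    rw [add_tsub_cancel_right, mul_pow, Ne, hu.mul_left_eq_zero]
    exact root_X_pow_pow_ne_zero (by omega)
  rw [sum_fin_succ_smul_pow, add_comm (algebraMap K _ _), minpoly.add_algebraMap, hmin]
  simp

noncomputable def constCoeff (hm : 1 ≤ m) : AdjoinRoot (X ^ m : K[X]) →ₐ[K] K :=
  liftAlgHom _ (Algebra.ofId K K) 0 (by simp; omega)

/-- Reduction modulo `ξ²`, with `K[ξ]/(ξ²)` realised as the dual numbers. -/
noncomputable def toDualNumber (hm : 2 ≤ m) : AdjoinRoot (X ^ m : K[X]) →ₐ[K] DualNumber K :=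
  liftAlgHom _ (Algebra.ofId K _) DualNumber.eps
    (by obtain ⟨k, rfl⟩ := Nat.exists_eq_add_of_le hm; simp [pow_add, DualNumber.eps_pow_two])

@[simp]
theorem constCoeff_root (hm : 1 ≤ m) : constCoeff hm (root (X ^ m : K[X])) = 0 :=
  liftAlgHom_root ..

@[simp]
theorem toDualNumber_root (hm : 2 ≤ m) :
    toDualNumber hm (root (X ^ m : K[X])) = DualNumber.eps :=
  liftAlgHom_root ..

theorem constCoeff_sum_smul_root_pow (hm : 1 ≤ m) (y : Fin m → K) :
    constCoeff hm (∑ j, y j • root (X ^ m : K[X]) ^ (j : ℕ)) = y ⟨0, hm⟩ := by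
  obtain ⟨k, rfl⟩ := Nat.exists_eq_add_of_le' hm
  simp only [map_sum, map_smul, map_pow, constCoeff_root]
  rw [sum_fin_succ_smul_pow, zero_mul, add_zero]
  rfl

theorem toDualNumber_sum_smul_root_pow (hm : 2 ≤ m) (y : Fin m → K) :
    toDualNumber hm (∑ j, y j • root (X ^ m : K[X]) ^ (j : ℕ)) =
      algebraMap K _ (y ⟨0, by omega⟩) + y ⟨1, hm⟩ • DualNumber.eps := by
  obtain ⟨k, rfl⟩ := Nat.exists_eq_add_of_le' hm
  simp only [map_sum, map_smul, map_pow, toDualNumber_root]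
  rw [sum_fin_succ_smul_pow, sum_fin_succ_smul_pow, mul_add, ← mul_assoc, DualNumber.eps_mul_eps,
    zero_mul, add_zero, ← Algebra.commutes, ← Algebra.smul_def]
  rfl

end AdjoinRoot

open AdjoinRoot

theorem Algebra.adjoin_singleton_eq_top_of_span_pow_eq_top {R A : Type*} [CommSemiring R]
    [Semiring A] [Algebra R A] {x : A} {n : ℕ}
    (h : Submodule.span R (Set.range fun i : Fin n => x ^ (i : ℕ)) = ⊤) :
    Algebra.adjoin R {x} = ⊤ := by
  refine top_unique fun a _ => ?_
  have ha : a ∈ Submodule.span R (Set.range fun i : Fin n => x ^ (i : ℕ)) :=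
    h ▸ Submodule.mem_top
  refine (Submodule.span_le (p := Subalgebra.toSubmodule (Algebra.adjoin R {x}))).2 ?_ ha
  rintro _ ⟨i, rfl⟩
  exact pow_mem (Algebra.self_mem_adjoin_singleton R x) _

theorem span_pow_eq_top_of_le_natDegree_minpoly {K A : Type*} [Field K] [Ring A] [Algebra K A]
    [FiniteDimensional K A] {x : A} {n : ℕ} (hn : Module.finrank K A = n)
    (h : n ≤ (minpoly K x).natDegree) :
    Submodule.span K (Set.range fun i : Fin n => x ^ (i : ℕ)) = ⊤ :=
  ((linearIndependent_pow x).comp (Fin.castLE h) (Fin.castLE_injective h)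
    ).span_eq_top_of_card_eq_finrank' (by rw [Fintype.card_fin, hn])

theorem sum_le_natDegree_minpoly_pi {K ι : Type*} [Field K] [Fintype ι] {m : ι → ℕ}
    {B : ι → Type*} [∀ α, Ring (B α)] [∀ α, Algebra K (B α)] [∀ α, FiniteDimensional K (B α)]
    (Y : (α : ι) → B α) {c : ι → K}
    (hc : Function.Injective c) (hY : ∀ α, minpoly K (Y α) = (X - C (c α)) ^ m α) :
    ∑ α, m α ≤ (minpoly K Y).natDegree := by
  have hdvd : ∏ α, (X - C (c α)) ^ m α ∣ minpoly K Y := by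
    refine Finset.prod_dvd_of_coprime (fun α _ β _ hne => (pairwise_coprime_X_sub_C hc hne).pow)
      fun α _ => hY α ▸ minpoly.dvd K _ ?_
    rw [show Y α = Pi.evalAlgHom K B α Y from rfl, aeval_algHom_apply, minpoly.aeval, map_zero]
  calc ∑ α, m α = (∏ α, (X - C (c α)) ^ m α).natDegree := by
        rw [natDegree_prod _ _ fun α _ => pow_ne_zero _ (X_sub_C_ne_zero _)]
        simp
    _ ≤ _ := natDegree_le_of_dvd hdvd (minpoly.ne_zero (Algebra.IsIntegral.isIntegral Y))

section

variable {K ι : Type*} [Field K] {m : ι → ℕ} {Y : (α : ι) → AdjoinRoot (X ^ m α : K[X])}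

theorem toDualNumber_ne_of_adjoin_eq_top (htop : Algebra.adjoin K {Y} = ⊤) (α : ι)
    (h2 : 2 ≤ m α) :
    toDualNumber h2 (Y α) ≠ algebraMap K _ (constCoeff (by omega) (Y α)) := by
  classical
  intro h
  have hext := AlgHom.ext_of_adjoin_eq_top htop
    (φ₁ := (toDualNumber h2).comp (Pi.evalAlgHom K _ α))
    (φ₂ := (Algebra.ofId K _).comp ((constCoeff (by omega)).comp (Pi.evalAlgHom K _ α)))
    (by simpa using h)
  simpa using congr(TrivSqZeroExt.snd ($hext (Pi.single α (root _))))

theorem constCoeff_ne_of_adjoin_eq_top (htop : Algebra.adjoin K {Y} = ⊤) {α β : ι}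
    (hne : α ≠ β) (hα : 1 ≤ m α) (hβ : 1 ≤ m β) :
    constCoeff hα (Y α) ≠ constCoeff hβ (Y β) := by
  classical
  intro h
  have hext := AlgHom.ext_of_adjoin_eq_top htop
    (φ₁ := (constCoeff hα).comp (Pi.evalAlgHom K _ α))
    (φ₂ := (constCoeff hβ).comp (Pi.evalAlgHom K _ β))
    (by simpa using h)
  simpa [hne.symm] using congr($hext (Pi.single α 1))

end

/-- For a direct sum `A = ⊕_α K[ξ]/(ξ^{m_α})` of truncated polynomial algebras and
`X = (X_α)_α` with `X_α = ∑_i x_i^{(α)} ξ^{i-1}`, the unit `e = 1` is a cyclic vector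
for multiplication by `X` (the powers `X^0, …, X^{n-1}`, `n = ∑ m_α`, span `A`) iff
`x₂^{(α)} ≠ 0` for every block with `m_α ≥ 2`, and `x₁^{(α)} ≠ x₁^{(β)}` for `α ≠ β`. -/
theorem stmt9 {K : Type*} [Field K] {r : ℕ} (m : Fin r → ℕ) (hm : ∀ α, 1 ≤ m α)
    (x : (α : Fin r) → Fin (m α) → K)
    (X : (α : Fin r) → AdjoinRoot (Polynomial.X ^ (m α) : Polynomial K))
    (hX : ∀ α, X α = ∑ j : Fin (m α),
        x α j • (AdjoinRoot.root (Polynomial.X ^ (m α) : Polynomial K)) ^ (j : ℕ)) :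
    Submodule.span K (Set.range fun i : Fin (∑ α, m α) => X ^ (i : ℕ)) = ⊤
      ↔ ((∀ α, ∀ _ : 2 ≤ m α, x α ⟨1, by omega⟩ ≠ 0) ∧
          ∀ α β, α ≠ β → x α ⟨0, hm α⟩ ≠ x β ⟨0, hm β⟩) := by
  constructor
  · intro hspan
    have htop := Algebra.adjoin_singleton_eq_top_of_span_pow_eq_top hspan
    refine ⟨fun α h2 hx1 => ?_, fun α β hne => ?_⟩
    · apply toDualNumber_ne_of_adjoin_eq_top htop α h2
      rw [hX α, toDualNumber_sum_smul_root_pow, constCoeff_sum_smul_root_pow, hx1, zero_smul,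
        add_zero]
    · simpa only [hX, constCoeff_sum_smul_root_pow] using
        constCoeff_ne_of_adjoin_eq_top htop hne (hm α) (hm β)
  · rintro ⟨h1, h2⟩
    refine span_pow_eq_top_of_le_natDegree_minpoly
      (by simp [Module.finrank_pi_fintype, finrank_X_pow]) ?_
    refine sum_le_natDegree_minpoly_pi X (fun α β h => by_contra fun hne => h2 α β hne h)
      fun α => ?_
    rw [hX α]
    exact minpoly_sum_smul_root_pow (hm α) (x α) (h1 α)
end

section
/- Let (V, ∘, e) be a commutative associative unital algebra and T : V×V×V → V a trilinear map symmetric in its last two arguments such that the covariant associativity identity T(U, V₁∘W, Z) + T(U,V₁,W)∘Z = T(U, V₁, W∘Z) + V₁∘T(U,W,Z) holds for all U,V₁,W,Z. Define the symmetry property S(U): T(U,Y,Z) = T(Y,U,Z) for all Y,Z. Suppose also the covariant Hertling–Manin identity 0 = T(R∘S,P,Q) − T(P∘Q,R,S) + T(P,R,S)∘Q + T(Q,R,S)∘P − T(S,P,Q)∘R − T(R,P,Q)∘S holds for all P,Q,R,S. If S(X) and S(U₀) hold for elements X, U₀ ∈ V, then S(X∘U₀) holds. -/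
/-- Propagation of symmetry: let `T` be trilinear, symmetric in its last two arguments,
satisfying the covariant associativity identity and the covariant Hertling–Manin
identity.  If `T(X,·,·) = T(·,X,·)` and `T(U₀,·,·) = T(·,U₀,·)`, then
`T(X∘U₀,·,·) = T(·,X∘U₀,·)`. -/
theorem stmt15 {K V : Type*} [Field K] [CommRing V] [Algebra K V]
    (T : V →ₗ[K] V →ₗ[K] V →ₗ[K] V)
    (hsymm : ∀ u y z, T u y z = T u z y)
    (covassoc : ∀ u v w z,
      T u (v * w) z + T u v w * z = T u v (w * z) + v * T u w z)
    (covHM : ∀ p q r s,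
      0 = T (r * s) p q - T (p * q) r s + T p r s * q + T q r s * p
          - T s p q * r - T r p q * s)
    (X U₀ : V)
    (hSX : ∀ y z, T X y z = T y X z)
    (hSU : ∀ y z, T U₀ y z = T y U₀ z) :
    ∀ y z, T (X * U₀) y z = T y (X * U₀) z := by
  intro y z
  have h1 := covHM y z X U₀
  have h2 := covassoc y X U₀ z
  have h3 := covassoc X y z U₀
  have e1 := hSU y z
  have e2 := hSX (y * z) U₀
  have e3 := hSX y (U₀ * z)
  have e4 := hSX z U₀
  have hm : (T X) y (z * U₀) = (T X) y (U₀ * z) := by rw [mul_comm]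
  linear_combination -h1 - h2 + X * e1 + h3 - e2 + y * e4 + e3 + hm
end
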